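/- There exists a constant C > 0 such that for all positive integers m and all irrational θ, Y(θ) ≤ Y(mθ) + C·log m, where Y is the Yoccoz–Brjuno function. -/

import Mathlib

open scoped ENNReal
open Classical

/-- The Gauss-map iterates of `θ`: `θ_0 = {θ}`, `θ_{n+1} = {1/θ_n}`. -/
noncomputable def gaussIter (θ : ℝ) : ℕ → ℝ
  | 0 => Int.fract θ
  | n + 1 => Int.fract (1 / gaussIter θ n)

/-- Yoccoz's Brjuno function `Y(θ) = ∑ θ_0⋯θ_{n-1} log(1/θ_n) ∈ (0, ∞]` for irrational
`θ`, and `Y(θ) = ∞` for rational `θ`. -/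
noncomputable def brjunoY (θ : ℝ) : ℝ≥0∞ :=
  if Irrational θ then
    ∑' n : ℕ,
      ENNReal.ofReal ((∏ i ∈ Finset.range n, gaussIter θ i) * Real.log (1 / gaussIter θ n))
  else ⊤

/-!
Write `β_n = θ_0 ⋯ θ_{n-1}`; this is the error `|q_{n-1} θ - p_{n-1}|` of the continued
fraction convergents `p_k / q_k` of `θ`. Since `β_{n+1} = β_n θ_n` and `∑ β_n log (1/β_n)` is
uniformly bounded (the `β_n` decay geometrically), `Y(θ)` agrees up to a constant with
`S(θ) = ∑ β_n log (1/β_{n+1})`, and it suffices to compare `S(θ)` with `S(mθ)`.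

An index with `β_n ≤ 2m β_{n+1}` contributes at most `β_n log (2m/β_n)`, and these sum to
`O(log m)`. Otherwise the convergent `p/q` with `|q θ - p| = β_{n+1}` satisfies
`2 q m β_{n+1} < 1`, so by Legendre's theorem `m p / q` in lowest terms `P/Q` is a convergent of
`mθ`, with error `β'_{j+1} = (m/g) β_{n+1}` where `g = gcd(m, q)`. Then
`β_n ≤ 1/q ≤ 1/Q ≤ β'_j + β'_{j+1}` bounds the `n`-th term of `S(θ)` by the `j`-th term of
`S(mθ)` plus `2 √β'_{j+1} + β_n log m`, and distinct `n` give distinct `j` because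
`β_{n+1}/q = β'_{j+1}/(m Q)` is strictly decreasing in `n`.
-/

theorem mul_log_one_div_le_two_mul_sqrt {x : ℝ} (hx : 0 < x) :
    x * Real.log (1 / x) ≤ 2 * √x := by
  have hlog : Real.log (1 / x) = 2 * Real.log (1 / √x) := by
    rw [one_div, one_div, Real.log_inv, Real.log_inv, Real.log_sqrt hx.le]; ring
  have hle : Real.log (1 / √x) ≤ 1 / √x :=
    (Real.log_le_sub_one_of_pos (by positivity)).trans (by linarith)
  calc x * Real.log (1 / x) ≤ x * (2 * (1 / √x)) := by rw [hlog]; gcongr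
    _ = 2 * (x / √x) := by ring
    _ = 2 * √x := by rw [Real.div_sqrt]

theorem tsum_ofReal_le_of_le_geometric {f : ℕ → ℝ} {c r : ℝ} (hc : 0 ≤ c) (hr₀ : 0 ≤ r)
    (hr₁ : r < 1) (hf : ∀ n, f n ≤ c * r ^ n) :
    ∑' n, ENNReal.ofReal (f n) ≤ ENNReal.ofReal (c / (1 - r)) := by
  have hsum : ∑' n, c * r ^ n = c / (1 - r) := by
    rw [tsum_mul_left, tsum_geometric_of_lt_one hr₀ hr₁, div_eq_mul_inv]
  calc ∑' n, ENNReal.ofReal (f n) ≤ ∑' n, ENNReal.ofReal (c * r ^ n) :=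
        ENNReal.tsum_le_tsum fun n => ENNReal.ofReal_le_ofReal (hf n)
    _ = ENNReal.ofReal (c / (1 - r)) := by
        rw [← hsum, ENNReal.ofReal_tsum_of_nonneg (fun n => by positivity)
          ((summable_geometric_of_lt_one hr₀ hr₁).mul_left c)]

theorem ENNReal.tsum_le_tsum_add_tsum_of_injective {α β : Type*} {a : α → ℝ≥0∞}
    {b : β → ℝ≥0∞} {r : α → ℝ≥0∞} (s : Set α) (J : s → β) (hJ : J.Injective)
    (hs : ∀ i : s, a i ≤ b (J i) + r i) (hsc : ∀ i ∉ s, a i ≤ r i) :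
    ∑' i, a i ≤ ∑' j, b j + ∑' i, r i := by
  calc ∑' i, a i = ∑' i : s, a i + ∑' i : ↥sᶜ, a i :=
        (ENNReal.summable.tsum_add_tsum_compl ENNReal.summable).symm
    _ ≤ ∑' i : s, (b (J i) + r i) + ∑' i : ↥sᶜ, r i :=
        add_le_add (ENNReal.tsum_le_tsum hs) (ENNReal.tsum_le_tsum fun i => hsc i i.2)
    _ = ∑' i : s, b (J i) + (∑' i : s, r i + ∑' i : ↥sᶜ, r i) := by
        rw [ENNReal.tsum_add, add_assoc]
    _ ≤ ∑' j, b j + ∑' i, r i := by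
        rw [ENNReal.summable.tsum_add_tsum_compl ENNReal.summable]
        gcongr
        exact ENNReal.tsum_comp_le_tsum_of_injective hJ b

theorem abs_le_abs_add_of_mul_nonneg {α : Type*} [CommRing α] [LinearOrder α]
    [IsStrictOrderedRing α] {a b : α} (h : 0 ≤ a * b) : |a| ≤ |a + b| := by
  rcases le_total 0 a with ha | ha <;> rcases le_total 0 b with hb | hb
  · rw [abs_of_nonneg ha, abs_of_nonneg (add_nonneg ha hb)]; linarith
  · rcases mul_eq_zero.mp (le_antisymm (mul_nonpos_of_nonneg_of_nonpos ha hb) h) with rfl | rfl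
      <;> simp
  · rcases mul_eq_zero.mp (le_antisymm (mul_nonpos_of_nonpos_of_nonneg ha hb) h) with rfl | rfl
      <;> simp
  · rw [abs_of_nonpos ha, abs_of_nonpos (add_nonpos ha hb)]; linarith

noncomputable def partialQuot (θ : ℝ) (n : ℕ) : ℤ := ⌊1 / gaussIter θ n⌋

noncomputable def gaussProd (θ : ℝ) (n : ℕ) : ℝ := ∏ i ∈ Finset.range n, gaussIter θ i

section GaussProd

variable {θ : ℝ}

theorem irrational_gaussIter (hθ : Irrational θ) (n : ℕ) : Irrational (gaussIter θ n) := by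
  induction n with
  | zero => exact hθ.sub_intCast ⌊θ⌋
  | succ n ih => exact (one_div (gaussIter θ n) ▸ ih.inv).sub_intCast _

theorem gaussIter_pos (hθ : Irrational θ) (n : ℕ) : 0 < gaussIter θ n := by
  refine lt_of_le_of_ne ?_ (fun h => (irrational_gaussIter hθ n).ne_int 0 (by simp [← h]))
  cases n <;> exact Int.fract_nonneg _

theorem gaussIter_lt_one (θ : ℝ) (n : ℕ) : gaussIter θ n < 1 := by
  cases n <;> exact Int.fract_lt_one _

theorem gaussIter_succ (θ : ℝ) (n : ℕ) :
    gaussIter θ (n + 1) = 1 / gaussIter θ n - partialQuot θ n :=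
  rfl

theorem one_le_partialQuot (hθ : Irrational θ) (n : ℕ) : 1 ≤ partialQuot θ n := by
  rw [partialQuot, Int.le_floor, Int.cast_one, le_div_iff₀ (gaussIter_pos hθ n), one_mul]
  exact (gaussIter_lt_one θ n).le

@[simp] theorem gaussProd_zero (θ : ℝ) : gaussProd θ 0 = 1 := rfl

theorem gaussProd_succ (θ : ℝ) (n : ℕ) :
    gaussProd θ (n + 1) = gaussProd θ n * gaussIter θ n :=
  Finset.prod_range_succ _ _

theorem gaussProd_pos (hθ : Irrational θ) (n : ℕ) : 0 < gaussProd θ n :=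
  Finset.prod_pos fun i _ => gaussIter_pos hθ i

theorem gaussProd_succ_lt (hθ : Irrational θ) (n : ℕ) :
    gaussProd θ (n + 1) < gaussProd θ n := by
  rw [gaussProd_succ]
  exact mul_lt_of_lt_one_right (gaussProd_pos hθ n) (gaussIter_lt_one θ n)

theorem gaussProd_strictAnti (hθ : Irrational θ) : StrictAnti (gaussProd θ) :=
  strictAnti_nat_of_succ_lt (gaussProd_succ_lt hθ)

theorem gaussProd_le_one (hθ : Irrational θ) (n : ℕ) : gaussProd θ n ≤ 1 :=
  gaussProd_zero θ ▸ (gaussProd_strictAnti hθ).antitone n.zero_le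

theorem gaussProd_add_two (hθ : Irrational θ) (n : ℕ) :
    gaussProd θ (n + 2) = gaussProd θ n - partialQuot θ n * gaussProd θ (n + 1) := by
  have := (gaussIter_pos hθ n).ne'
  rw [gaussProd_succ, gaussIter_succ, gaussProd_succ]
  field_simp

theorem two_mul_gaussProd_add_two_le (hθ : Irrational θ) (n : ℕ) :
    2 * gaussProd θ (n + 2) ≤ gaussProd θ n := by
  have ha : (1 : ℝ) ≤ partialQuot θ n := by exact_mod_cast one_le_partialQuot hθ n
  have := gaussProd_add_two hθ n
  nlinarith [gaussProd_succ_lt hθ (n + 1), gaussProd_pos hθ (n + 1)]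

theorem gaussProd_le_geometric (hθ : Irrational θ) : ∀ n, gaussProd θ n ≤ 2 * (81 / 100) ^ n
  | 0 => by norm_num
  | 1 => by linarith [gaussProd_le_one hθ 1]
  | n + 2 => by
    have := gaussProd_le_geometric hθ n
    have := two_mul_gaussProd_add_two_le hθ n
    rw [pow_add]
    nlinarith [pow_nonneg (show (0 : ℝ) ≤ 81 / 100 by norm_num) n]

theorem sqrt_gaussProd_le (hθ : Irrational θ) (n : ℕ) :
    √(gaussProd θ n) ≤ 3 / 2 * (9 / 10) ^ n := by
  rw [Real.sqrt_le_left (by positivity), mul_pow, ← pow_mul, mul_comm n, pow_mul]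
  linarith [gaussProd_le_geometric hθ n, pow_nonneg (show (0 : ℝ) ≤ 81 / 100 by norm_num) n]

theorem gaussProd_le_sqrt (hθ : Irrational θ) (n : ℕ) : gaussProd θ n ≤ √(gaussProd θ n) :=
  Real.le_sqrt_of_sq_le <|
    pow_le_of_le_one (gaussProd_pos hθ n).le (gaussProd_le_one hθ n) two_ne_zero

end GaussProd

noncomputable def cfRec (θ : ℝ) (u₀ u₁ : ℤ) : ℕ → ℤ
  | 0 => u₀
  | 1 => u₁
  | n + 2 => cfRec θ u₀ u₁ n + partialQuot θ n * cfRec θ u₀ u₁ (n + 1)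

/-- `cfNum θ (n + 1) / cfDen θ (n + 1)` is the `n`-th convergent `p_n / q_n` of `θ`;
index `0` holds `(p_{-1}, q_{-1}) = (1, 0)`. -/
noncomputable def cfNum (θ : ℝ) : ℕ → ℤ := cfRec θ 1 ⌊θ⌋

noncomputable def cfDen (θ : ℝ) : ℕ → ℤ := cfRec θ 0 1

section ContinuedFraction

variable {θ : ℝ}

theorem cfRec_add_two (θ : ℝ) (u₀ u₁ : ℤ) (n : ℕ) :
    cfRec θ u₀ u₁ (n + 2) = cfRec θ u₀ u₁ n + partialQuot θ n * cfRec θ u₀ u₁ (n + 1) :=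
  rfl

theorem cfNum_add_two (θ : ℝ) (n : ℕ) :
    cfNum θ (n + 2) = cfNum θ n + partialQuot θ n * cfNum θ (n + 1) :=
  rfl

theorem cfDen_add_two (θ : ℝ) (n : ℕ) :
    cfDen θ (n + 2) = cfDen θ n + partialQuot θ n * cfDen θ (n + 1) :=
  rfl

theorem cfRec_mul_cfRec_succ_sub (θ : ℝ) (u₀ u₁ v₀ v₁ : ℤ) (n : ℕ) :
    cfRec θ u₀ u₁ n * cfRec θ v₀ v₁ (n + 1) - cfRec θ v₀ v₁ n * cfRec θ u₀ u₁ (n + 1)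
      = (-1) ^ n * (u₀ * v₁ - v₀ * u₁) := by
  induction n with
  | zero => rw [pow_zero, one_mul]; rfl
  | succ n ih => rw [cfRec_add_two, cfRec_add_two, pow_succ]; linear_combination -ih

theorem cfNum_mul_cfDen_succ_sub (θ : ℝ) (n : ℕ) :
    cfNum θ n * cfDen θ (n + 1) - cfDen θ n * cfNum θ (n + 1) = (-1) ^ n :=
  (cfRec_mul_cfRec_succ_sub θ 1 ⌊θ⌋ 0 1 n).trans (by ring)

theorem isCoprime_cfNum_cfDen (θ : ℝ) (n : ℕ) : IsCoprime (cfNum θ n) (cfDen θ n) :=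
  ⟨(-1) ^ n * cfDen θ (n + 1), -((-1) ^ n * cfNum θ (n + 1)), by
    linear_combination (-1 : ℤ) ^ n * cfNum_mul_cfDen_succ_sub θ n
      + pow_mul_pow_eq_one n (by norm_num : (-1 : ℤ) * -1 = 1)⟩

theorem cfDen_nonneg_and_le_succ (hθ : Irrational θ) (n : ℕ) :
    0 ≤ cfDen θ n ∧ cfDen θ n ≤ cfDen θ (n + 1) := by
  induction n with
  | zero => exact ⟨le_rfl, zero_le_one⟩
  | succ n ih =>
    refine ⟨ih.1.trans ih.2, ?_⟩
    rw [cfDen_add_two]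
    nlinarith [one_le_partialQuot hθ n]

theorem cfDen_mono (hθ : Irrational θ) : Monotone (cfDen θ) :=
  monotone_nat_of_le_succ fun n => (cfDen_nonneg_and_le_succ hθ n).2

theorem cfDen_nonneg (hθ : Irrational θ) (n : ℕ) : 0 ≤ cfDen θ n :=
  (cfDen_nonneg_and_le_succ hθ n).1

theorem one_le_cfDen (hθ : Irrational θ) (n : ℕ) : 1 ≤ cfDen θ (n + 1) :=
  cfDen_mono hθ (Nat.le_add_left 1 n)

theorem le_cfDen (hθ : Irrational θ) : ∀ n : ℕ, (n : ℤ) ≤ cfDen θ (n + 1)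
  | 0 => zero_le_one
  | 1 => by
    have := one_le_partialQuot hθ 0
    rw [cfDen_add_two]
    simpa [cfDen, cfRec] using this
  | n + 2 => by
    have := le_cfDen hθ (n + 1)
    rw [cfDen_add_two]
    push_cast at this ⊢
    nlinarith [one_le_cfDen hθ n,
      mul_le_mul_of_nonneg_right (one_le_partialQuot hθ (n + 1)) (cfDen_nonneg hθ (n + 2))]

theorem cfDen_mul_gaussProd_add (hθ : Irrational θ) (n : ℕ) :
    (cfDen θ (n + 1) : ℝ) * gaussProd θ n + cfDen θ n * gaussProd θ (n + 1) = 1 := by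
  induction n with
  | zero => simp [cfDen, cfRec, gaussProd]
  | succ n ih =>
    rw [cfDen_add_two, gaussProd_add_two hθ]
    push_cast
    linear_combination ih

theorem cfDen_mul_gaussProd_le_one (hθ : Irrational θ) (n : ℕ) :
    (cfDen θ (n + 1) : ℝ) * gaussProd θ n ≤ 1 := by
  have := cfDen_mul_gaussProd_add hθ n
  have : (0 : ℝ) ≤ cfDen θ n * gaussProd θ (n + 1) :=
    mul_nonneg (by exact_mod_cast cfDen_nonneg hθ n) (gaussProd_pos hθ _).le
  linarith

theorem one_le_cfDen_mul_gaussProd_add (hθ : Irrational θ) (n : ℕ) :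
    1 ≤ (cfDen θ (n + 1) : ℝ) * (gaussProd θ n + gaussProd θ (n + 1)) := by
  have := cfDen_mul_gaussProd_add hθ n
  have : (cfDen θ n : ℝ) ≤ cfDen θ (n + 1) := by exact_mod_cast cfDen_mono hθ n.le_succ
  nlinarith [gaussProd_pos hθ (n + 1)]

theorem cfNum_sub_cfDen_mul (hθ : Irrational θ) :
    ∀ n : ℕ, (cfNum θ n : ℝ) - cfDen θ n * θ = (-1) ^ n * gaussProd θ n
  | 0 => by simp [cfNum, cfDen, cfRec, gaussProd]
  | 1 => by
    rw [gaussProd_succ, gaussProd_zero, one_mul]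
    simp only [cfNum, cfDen, cfRec, gaussIter, Int.fract]
    push_cast; ring
  | n + 2 => by
    have h₀ := cfNum_sub_cfDen_mul hθ n
    have h₁ := cfNum_sub_cfDen_mul hθ (n + 1)
    rw [cfNum_add_two, cfDen_add_two, gaussProd_add_two hθ]
    push_cast
    linear_combination h₀ + partialQuot θ n * h₁

theorem abs_cfDen_mul_sub_cfNum (hθ : Irrational θ) (n : ℕ) :
    |(cfDen θ n : ℝ) * θ - cfNum θ n| = gaussProd θ n := by
  rw [abs_sub_comm, cfNum_sub_cfDen_mul hθ, abs_mul, abs_pow, abs_neg, abs_one, one_pow, one_mul,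
    abs_of_pos (gaussProd_pos hθ n)]

theorem cfDen_mul_sub_cfNum_mul_succ_nonpos (hθ : Irrational θ) (n : ℕ) :
    ((cfDen θ n : ℝ) * θ - cfNum θ n) * (cfDen θ (n + 1) * θ - cfNum θ (n + 1)) ≤ 0 := by
  have h₀ := cfNum_sub_cfDen_mul hθ n
  have h₁ := cfNum_sub_cfDen_mul hθ (n + 1)
  have hsq : (-1 : ℝ) ^ n * (-1) ^ n = 1 := pow_mul_pow_eq_one n (by norm_num)
  have : ((cfDen θ n : ℝ) * θ - cfNum θ n) * (cfDen θ (n + 1) * θ - cfNum θ (n + 1)) =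
      -(gaussProd θ n * gaussProd θ (n + 1)) := by
    linear_combination (cfNum θ (n + 1) - cfDen θ (n + 1) * θ) * h₀
      + ((-1) ^ n * gaussProd θ n) * h₁ - (gaussProd θ n * gaussProd θ (n + 1)) * hsq
  rw [this, neg_nonpos]
  exact (mul_pos (gaussProd_pos hθ n) (gaussProd_pos hθ (n + 1))).le

end ContinuedFraction

section Approximation

variable {θ : ℝ}

theorem gaussProd_le_abs_mul_sub (hθ : Irrational θ) {n : ℕ} {Q : ℤ} (P : ℤ) (hQ : 1 ≤ Q)
    (hQn : Q < cfDen θ (n + 1)) : gaussProd θ n ≤ |(Q : ℝ) * θ - P| := by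
  set d : ℤ := (-1) ^ n
  have hd : d * d = 1 := pow_mul_pow_eq_one n (by norm_num)
  have hdet := cfNum_mul_cfDen_succ_sub θ n
  -- `(X, Y)` are the coordinates of `(Q, P)` in the unimodular basis of two consecutive convergents
  set X := d * (cfDen θ (n + 1) * P - cfNum θ (n + 1) * Q)
  set Y := d * (cfNum θ n * Q - cfDen θ n * P)
  have hQXY : Q = X * cfDen θ n + Y * cfDen θ (n + 1) := by
    linear_combination (-(d * Q)) * hdet - Q * hd
  have hPXY : P = X * cfNum θ n + Y * cfNum θ (n + 1) := by
    linear_combination (-(d * P)) * hdet - P * hd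
  have hX : X ≠ 0 ∧ X * Y ≤ 0 := by
    have := cfDen_nonneg hθ n
    constructor
    · rintro hX₀
      rw [hX₀] at hQXY
      rcases le_or_gt Y 0 with hY | hY <;> nlinarith
    · rcases le_or_gt X 0 with hX | hX <;> rcases le_or_gt Y 0 with hY | hY <;> nlinarith
  have he : (Q : ℝ) * θ - P = X * (cfDen θ n * θ - cfNum θ n) +
      Y * (cfDen θ (n + 1) * θ - cfNum θ (n + 1)) := by
    have hQ' : (Q : ℝ) = X * cfDen θ n + Y * cfDen θ (n + 1) := by exact_mod_cast hQXY
    have hP' : (P : ℝ) = X * cfNum θ n + Y * cfNum θ (n + 1) := by exact_mod_cast hPXY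
    linear_combination θ * hQ' - hP'
  calc gaussProd θ n ≤ |(X : ℝ)| * gaussProd θ n :=
        le_mul_of_one_le_left (gaussProd_pos hθ n).le (by exact_mod_cast Int.one_le_abs hX.1)
    _ = |X * (cfDen θ n * θ - cfNum θ n)| := by rw [abs_mul, abs_cfDen_mul_sub_cfNum hθ]
    _ ≤ |(Q : ℝ) * θ - P| := by
        refine he ▸ abs_le_abs_add_of_mul_nonneg ?_
        rw [mul_mul_mul_comm]
        exact mul_nonneg_of_nonpos_of_nonpos (by exact_mod_cast hX.2)
          (cfDen_mul_sub_cfNum_mul_succ_nonpos hθ n)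

theorem exists_cfDen_le_lt (hθ : Irrational θ) {Q : ℤ} (hQ : 1 ≤ Q) :
    ∃ n, cfDen θ (n + 1) ≤ Q ∧ Q < cfDen θ (n + 2) := by
  have hex : ∃ k, Q < cfDen θ (k + 1) :=
    ⟨Q.toNat + 1, by have := le_cfDen hθ (Q.toNat + 1); push_cast at this; omega⟩
  obtain ⟨n, hn⟩ : ∃ n, Nat.find hex = n + 1 := by
    refine Nat.exists_eq_add_one.mpr (Nat.pos_of_ne_zero fun h => ?_)
    have := Nat.find_spec hex
    rw [h] at this
    exact absurd hQ (not_le.mpr this)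
  exact ⟨n, not_lt.mp (Nat.find_min hex (by omega)), by simpa [hn] using Nat.find_spec hex⟩

theorem exists_cfNum_cfDen_eq_of_two_mul_abs_sub_lt (hθ : Irrational θ) {P Q : ℤ} (hQ : 1 ≤ Q)
    (hPQ : IsCoprime P Q) (hlt : 2 * Q * |(Q : ℝ) * θ - P| < 1) :
    ∃ n, cfNum θ (n + 1) = P ∧ cfDen θ (n + 1) = Q := by
  obtain ⟨n, hqQ, hQlt⟩ := exists_cfDen_le_lt hθ hQ
  set q := cfDen θ (n + 1)
  set p := cfNum θ (n + 1)
  have hD : |((P * q - p * Q : ℤ) : ℝ)| < 1 := by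
    have hq : (q : ℝ) ≤ Q := by exact_mod_cast hqQ
    have hq₀ : (0 : ℝ) ≤ q := by exact_mod_cast cfDen_nonneg hθ (n + 1)
    have hbest := gaussProd_le_abs_mul_sub hθ P hQ hQlt
    calc |((P * q - p * Q : ℤ) : ℝ)| = |-(q * (Q * θ - P)) + Q * (q * θ - p)| := by
          push_cast; ring_nf
      _ ≤ q * |(Q : ℝ) * θ - P| + Q * gaussProd θ (n + 1) := by
          refine (abs_add_le _ _).trans_eq ?_
          have hQ₀ : (0 : ℝ) ≤ Q := by exact_mod_cast zero_le_one.trans hQ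
          rw [abs_neg, abs_mul, abs_mul, abs_cfDen_mul_sub_cfNum hθ, abs_of_nonneg hq₀,
            abs_of_nonneg hQ₀]
      _ ≤ 2 * Q * |(Q : ℝ) * θ - P| := by nlinarith [abs_nonneg ((Q : ℝ) * θ - P)]
      _ < 1 := hlt
  have hPq : P * q = p * Q := by
    have := Int.abs_lt_one_iff.mp (by exact_mod_cast hD)
    linarith
  have hQq : Q = q := Int.dvd_antisymm (by omega) (cfDen_nonneg hθ (n + 1))
    (hPQ.symm.dvd_of_dvd_mul_left ⟨p, by linear_combination hPq⟩)
    ((isCoprime_cfNum_cfDen θ (n + 1)).symm.dvd_of_dvd_mul_left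
      ⟨P, by linear_combination -hPq⟩)
  refine ⟨n, ?_, hQq.symm⟩
  rw [hQq] at hPq
  exact (mul_right_cancel₀ (by omega) hPq).symm

theorem strictAnti_gaussProd_div_cfDen (hθ : Irrational θ) :
    StrictAnti fun n => gaussProd θ (n + 1) / cfDen θ (n + 1) := by
  intro a b hab
  have hq : (cfDen θ (a + 1) : ℝ) ≤ cfDen θ (b + 1) := by
    exact_mod_cast cfDen_mono hθ (by omega)
  have hq₀ : (0 : ℝ) < cfDen θ (a + 1) := by exact_mod_cast one_le_cfDen hθ a
  calc gaussProd θ (b + 1) / cfDen θ (b + 1) ≤ gaussProd θ (b + 1) / cfDen θ (a + 1) := by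
        gcongr; exact (gaussProd_pos hθ _).le
    _ < gaussProd θ (a + 1) / cfDen θ (a + 1) := by
        gcongr; exact gaussProd_strictAnti hθ (by omega)

theorem exists_cfDen_gaussProd_natCast_mul (hθ : Irrational θ) {m : ℕ} (hm : 0 < m) {n : ℕ}
    (hn : 2 * m * gaussProd θ (n + 1) < gaussProd θ n) :
    ∃ j, ∃ g : ℝ, 1 ≤ g ∧ (cfDen (m * θ) (j + 1) : ℝ) * g = cfDen θ (n + 1) ∧
      gaussProd (m * θ) (j + 1) * g = m * gaussProd θ (n + 1) := by
  set q := cfDen θ (n + 1)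
  set p := cfNum θ (n + 1)
  have hq : 1 ≤ q := one_le_cfDen hθ n
  obtain ⟨g, m', Q, hg, hcop, hm', hQ⟩ :=
    Int.exists_gcd_one' (m := m) (n := q) (Int.gcd_pos_iff.mpr (Or.inr (by omega)))
  have hQ₁ : 1 ≤ Q := by nlinarith
  have hm'₁ : 1 ≤ m' := by nlinarith
  -- `m' p / Q` is `m p / q` in lowest terms
  have hPQ : IsCoprime (m' * p) Q :=
    (Int.isCoprime_iff_gcd_eq_one.mpr hcop).mul_left
      ((isCoprime_cfNum_cfDen θ (n + 1)).of_isCoprime_of_dvd_right ⟨g, hQ⟩)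
  have hmR : (m : ℝ) = m' * g := by exact_mod_cast hm'
  have hqR : (q : ℝ) = Q * g := by exact_mod_cast hQ
  have habs : |(Q : ℝ) * (m * θ) - (m' * p : ℤ)| = m' * gaussProd θ (n + 1) := by
    have hm'₀ : (0 : ℝ) ≤ m' := by exact_mod_cast (zero_le_one.trans hm'₁)
    rw [← abs_of_nonneg hm'₀, ← abs_cfDen_mul_sub_cfNum hθ, ← abs_mul, hmR, hqR]
    congr 1
    push_cast
    ring
  have hlt : 2 * Q * |(Q : ℝ) * (m * θ) - (m' * p : ℤ)| < 1 := by
    have hgR : (1 : ℝ) ≤ g * g := by nlinarith [show (1 : ℝ) ≤ g by exact_mod_cast hg]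
    have hQm' : (0 : ℝ) ≤ 2 * Q * m' * gaussProd θ (n + 1) := by
      have : (0 : ℝ) < Q * m' := by exact_mod_cast (mul_pos (by omega) (by omega) : 0 < Q * m')
      nlinarith [gaussProd_pos hθ (n + 1)]
    have hqR₀ : (0 : ℝ) < q := by exact_mod_cast hq
    calc 2 * Q * |(Q : ℝ) * (m * θ) - (m' * p : ℤ)|
        = 2 * Q * m' * gaussProd θ (n + 1) * 1 := by rw [habs]; ring
      _ ≤ 2 * Q * m' * gaussProd θ (n + 1) * (g * g) := mul_le_mul_of_nonneg_left hgR hQm'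
      _ = q * (2 * m * gaussProd θ (n + 1)) := by rw [hqR, hmR]; ring
      _ < q * gaussProd θ n := mul_lt_mul_of_pos_left hn hqR₀
      _ ≤ 1 := cfDen_mul_gaussProd_le_one hθ n
  obtain ⟨j, hpj, hqj⟩ :=
    exists_cfNum_cfDen_eq_of_two_mul_abs_sub_lt (hθ.natCast_mul hm.ne') hQ₁ hPQ hlt
  refine ⟨j, g, by exact_mod_cast hg, by rw [hqj, hqR], ?_⟩
  rw [← abs_cfDen_mul_sub_cfNum (hθ.natCast_mul hm.ne'), hpj, hqj, habs, hmR]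
  ring

end Approximation

theorem gaussProd_mul_log_le_of_cfDen_mul_eq {θ θ' : ℝ} (hθ : Irrational θ)
    (hθ' : Irrational θ') {n j : ℕ} {g μ : ℝ} (hg : 1 ≤ g) (hμ : 0 < μ)
    (hq : (cfDen θ' (j + 1) : ℝ) * g = cfDen θ (n + 1))
    (hβ : gaussProd θ' (j + 1) * g = μ * gaussProd θ (n + 1)) :
    gaussProd θ n * Real.log (1 / gaussProd θ (n + 1)) ≤
      gaussProd θ' j * Real.log (1 / gaussProd θ' (j + 1)) + 2 * √(gaussProd θ' (j + 1)) +
        gaussProd θ n * Real.log μ := by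
  have hβ₀ := gaussProd_pos hθ n
  have hβ₁ := gaussProd_pos hθ (n + 1)
  have hβ'₁ := gaussProd_pos hθ' (j + 1)
  set L := Real.log (1 / gaussProd θ' (j + 1))
  have hL : 0 ≤ L := Real.log_nonneg (one_le_one_div hβ'₁ (gaussProd_le_one hθ' _))
  have hlog : Real.log (1 / gaussProd θ (n + 1)) = L + Real.log (μ / g) := by
    rw [← Real.log_mul (by positivity) (by positivity)]
    congr 1
    field_simp
    linear_combination hβ
  have hlogμ : Real.log (μ / g) ≤ Real.log μ :=
    Real.log_le_log (by positivity) (div_le_self hμ.le hg)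
  have hweight : gaussProd θ n ≤ gaussProd θ' j + gaussProd θ' (j + 1) := by
    have hq₀ : (0 : ℝ) < cfDen θ (n + 1) := by exact_mod_cast one_le_cfDen hθ n
    refine le_of_mul_le_mul_left ?_ hq₀
    calc (cfDen θ (n + 1) : ℝ) * gaussProd θ n ≤ 1 := cfDen_mul_gaussProd_le_one hθ n
      _ ≤ cfDen θ' (j + 1) * (gaussProd θ' j + gaussProd θ' (j + 1)) :=
          one_le_cfDen_mul_gaussProd_add hθ' j
      _ ≤ cfDen θ (n + 1) * (gaussProd θ' j + gaussProd θ' (j + 1)) := by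
          rw [← hq]
          have : (0 : ℝ) ≤ cfDen θ' (j + 1) := by exact_mod_cast cfDen_nonneg hθ' (j + 1)
          gcongr
          · exact add_nonneg (gaussProd_pos hθ' j).le hβ'₁.le
          · exact le_mul_of_one_le_right this hg
  calc gaussProd θ n * Real.log (1 / gaussProd θ (n + 1))
      = gaussProd θ n * L + gaussProd θ n * Real.log (μ / g) := by rw [hlog, mul_add]
    _ ≤ (gaussProd θ' j + gaussProd θ' (j + 1)) * L + gaussProd θ n * Real.log μ := by
        gcongr
    _ ≤ gaussProd θ' j * L + 2 * √(gaussProd θ' (j + 1)) + gaussProd θ n * Real.log μ := by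
        linarith [mul_log_one_div_le_two_mul_sqrt hβ'₁]

section Sums

variable {θ : ℝ}

theorem gaussProd_mul_log_div_le (hθ : Irrational θ) {c : ℝ} (hc : 1 ≤ c) (n : ℕ) :
    gaussProd θ n * Real.log (c / gaussProd θ n) ≤ (3 + 3 / 2 * Real.log c) * (9 / 10) ^ n := by
  have hβ := gaussProd_pos hθ n
  have hlogc := Real.log_nonneg hc
  have hsqrt := sqrt_gaussProd_le hθ n
  rw [div_eq_mul_one_div, Real.log_mul (by positivity) (by positivity), mul_add]
  nlinarith [mul_log_one_div_le_two_mul_sqrt hβ,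
    mul_le_mul_of_nonneg_right (gaussProd_le_sqrt hθ n) hlogc,
    mul_le_mul_of_nonneg_right hsqrt hlogc]

theorem tsum_ofReal_gaussProd_mul_log_div_le (hθ : Irrational θ) {c : ℝ} (hc : 1 ≤ c) :
    ∑' n, ENNReal.ofReal (gaussProd θ n * Real.log (c / gaussProd θ n)) ≤
      ENNReal.ofReal (30 + 15 * Real.log c) := by
  refine (tsum_ofReal_le_of_le_geometric (by positivity [Real.log_nonneg hc]) (by norm_num)
    (by norm_num) (gaussProd_mul_log_div_le hθ hc)).trans_eq ?_
  congr 1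
  ring

theorem tsum_ofReal_two_mul_sqrt_gaussProd_succ_le (hθ : Irrational θ) :
    ∑' n, ENNReal.ofReal (2 * √(gaussProd θ (n + 1))) ≤ 30 := by
  have h := tsum_ofReal_le_of_le_geometric (f := fun n => 2 * √(gaussProd θ (n + 1)))
    (c := 3) (r := 9 / 10) (by norm_num) (by norm_num) (by norm_num) fun n => by
      have := sqrt_gaussProd_le hθ (n + 1)
      have := pow_le_pow_of_le_one (show (0 : ℝ) ≤ 9 / 10 by norm_num) (by norm_num)
        (n.le_add_right 1)
      linarith
  refine h.trans_eq ?_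
  norm_num

end Sums

noncomputable def brjunoS (θ : ℝ) : ℝ≥0∞ :=
  ∑' n, ENNReal.ofReal (gaussProd θ n * Real.log (1 / gaussProd θ (n + 1)))

section BrjunoS

variable {θ : ℝ}

theorem brjunoS_eq_brjunoY_add (hθ : Irrational θ) :
    brjunoS θ =
      brjunoY θ + ∑' n, ENNReal.ofReal (gaussProd θ n * Real.log (1 / gaussProd θ n)) := by
  rw [brjunoY, if_pos hθ, ← ENNReal.tsum_add]
  refine tsum_congr fun n => ?_
  change _ = ENNReal.ofReal (gaussProd θ n * _) + _
  have hβ := gaussProd_pos hθ n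
  have hθn := gaussIter_pos hθ n
  rw [← ENNReal.ofReal_add, gaussProd_succ, ← mul_add,
    ← Real.log_mul (by positivity) (by positivity)]
  · ring_nf
  · exact mul_nonneg hβ.le (Real.log_nonneg (one_le_one_div hθn (gaussIter_lt_one θ n).le))
  · exact mul_nonneg hβ.le (Real.log_nonneg (one_le_one_div hβ (gaussProd_le_one hθ n)))

theorem brjunoY_le_brjunoS (hθ : Irrational θ) : brjunoY θ ≤ brjunoS θ :=
  (brjunoS_eq_brjunoY_add hθ).symm ▸ le_self_add

theorem brjunoS_le_brjunoY_add (hθ : Irrational θ) : brjunoS θ ≤ brjunoY θ + 30 := by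
  rw [brjunoS_eq_brjunoY_add hθ]
  gcongr
  simpa using tsum_ofReal_gaussProd_mul_log_div_le hθ le_rfl

end BrjunoS

theorem gaussProd_mul_log_le_of_le {θ : ℝ} (hθ : Irrational θ) {n : ℕ} {c : ℝ}
    (h : gaussProd θ n ≤ c * gaussProd θ (n + 1)) :
    gaussProd θ n * Real.log (1 / gaussProd θ (n + 1)) ≤
      gaussProd θ n * Real.log (c / gaussProd θ n) := by
  have hβ := gaussProd_pos hθ n
  have hβ₁ := gaussProd_pos hθ (n + 1)
  refine mul_le_mul_of_nonneg_left (Real.log_le_log (by positivity) ?_) hβ.le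
  rw [div_le_div_iff₀ hβ₁ hβ]
  linarith

theorem exists_gaussProd_mul_log_le_natCast_mul {θ : ℝ} (hθ : Irrational θ) {m : ℕ}
    (hm : 0 < m) {n : ℕ} (hn : 2 * m * gaussProd θ (n + 1) < gaussProd θ n) :
    ∃ j, gaussProd θ n * Real.log (1 / gaussProd θ (n + 1)) ≤
        gaussProd (m * θ) j * Real.log (1 / gaussProd (m * θ) (j + 1)) +
          2 * √(gaussProd (m * θ) (j + 1)) + gaussProd θ n * Real.log (2 * m / gaussProd θ n) ∧
      gaussProd (m * θ) (j + 1) / (m * cfDen (m * θ) (j + 1)) =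
        gaussProd θ (n + 1) / cfDen θ (n + 1) := by
  have hy : Irrational (m * θ) := hθ.natCast_mul hm.ne'
  have hmR : (0 : ℝ) < m := by exact_mod_cast hm
  have hβ := gaussProd_pos hθ n
  obtain ⟨j, g, hg, hq, hβg⟩ := exists_cfDen_gaussProd_natCast_mul hθ hm hn
  refine ⟨j, (gaussProd_mul_log_le_of_cfDen_mul_eq hθ hy hg hmR hq hβg).trans ?_, ?_⟩
  · gcongr
    rw [le_div_iff₀ hβ]
    nlinarith [gaussProd_le_one hθ n]
  · have hq₀ : (0 : ℝ) < cfDen (m * θ) (j + 1) := by exact_mod_cast one_le_cfDen hy j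
    have hg₀ : (0 : ℝ) < g := by linarith
    rw [← hq, div_eq_div_iff (by positivity) (by positivity)]
    linear_combination (cfDen (m * θ) (j + 1) : ℝ) * hβg

theorem brjunoS_le_brjunoS_natCast_mul {θ : ℝ} (hθ : Irrational θ) {m : ℕ} (hm : 0 < m) :
    brjunoS θ ≤ brjunoS (m * θ) + ENNReal.ofReal (60 + 15 * Real.log (2 * m)) := by
  have hm₁ : (1 : ℝ) ≤ m := by exact_mod_cast hm
  set E := {n : ℕ | 2 * m * gaussProd θ (n + 1) < gaussProd θ n}
  choose J hJ using fun n : E => exists_gaussProd_mul_log_le_natCast_mul hθ hm n.2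
  have hJ_inj : J.Injective := fun a b hab =>
    Subtype.ext <| (strictAnti_gaussProd_div_cfDen hθ).injective <| by
      simp only [← (hJ a).2, ← (hJ b).2, hab]
  calc brjunoS θ
      ≤ ∑' j,
            (ENNReal.ofReal (gaussProd (m * θ) j * Real.log (1 / gaussProd (m * θ) (j + 1))) +
              ENNReal.ofReal (2 * √(gaussProd (m * θ) (j + 1)))) +
          ∑' n, ENNReal.ofReal (gaussProd θ n * Real.log (2 * m / gaussProd θ n)) := by
        refine ENNReal.tsum_le_tsum_add_tsum_of_injective E J hJ_inj (fun n => ?_)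
          fun n hn => ENNReal.ofReal_le_ofReal (gaussProd_mul_log_le_of_le hθ (not_lt.mp hn))
        exact (ENNReal.ofReal_le_ofReal (hJ n).1).trans
          (ENNReal.ofReal_add_le.trans (add_le_add ENNReal.ofReal_add_le le_rfl))
    _ ≤ brjunoS (m * θ) + 30 + ENNReal.ofReal (30 + 15 * Real.log (2 * m)) := by
        rw [ENNReal.tsum_add]
        gcongr
        · exact le_rfl
        · exact tsum_ofReal_two_mul_sqrt_gaussProd_succ_le (hθ.natCast_mul hm.ne')
        · exact tsum_ofReal_gaussProd_mul_log_div_le hθ (by linarith)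
    _ = brjunoS (m * θ) + ENNReal.ofReal (60 + 15 * Real.log (2 * m)) := by
        have : 0 ≤ Real.log (2 * m) := Real.log_nonneg (by linarith)
        rw [add_assoc, ← ENNReal.ofReal_ofNat 30,
          ← ENNReal.ofReal_add (by norm_num) (by positivity)]
        congr 2
        ring

/-- There is `C > 0` such that `Y(θ) ≤ Y(mθ) + C log m` for all positive integers `m`
and all irrational `θ`. -/
theorem brjunoY_mul_bound :
    ∃ C : ℝ, 0 < C ∧ ∀ m : ℕ, 0 < m → ∀ θ : ℝ, Irrational θ →
      brjunoY θ ≤ brjunoY (m * θ) + ENNReal.ofReal (C * Real.log m) := by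
  refine ⟨200, by norm_num, fun m hm θ hθ => ?_⟩
  obtain rfl | hm₂ : m = 1 ∨ 2 ≤ m := by omega
  · simp
  have hlog : Real.log 2 ≤ Real.log m := Real.log_le_log two_pos (by exact_mod_cast hm₂)
  have hlog₂ : Real.log (2 * m) = Real.log 2 + Real.log m :=
    Real.log_mul two_ne_zero (by positivity)
  have := Real.log_two_gt_d9
  calc brjunoY θ ≤ brjunoS θ := brjunoY_le_brjunoS hθ
    _ ≤ brjunoS (m * θ) + ENNReal.ofReal (60 + 15 * Real.log (2 * m)) :=
        brjunoS_le_brjunoS_natCast_mul hθ hm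
    _ ≤ brjunoY (m * θ) + 30 + ENNReal.ofReal (60 + 15 * Real.log (2 * m)) := by
        gcongr
        exact brjunoS_le_brjunoY_add (hθ.natCast_mul hm.ne')
    _ ≤ brjunoY (m * θ) + ENNReal.ofReal (200 * Real.log m) := by
        rw [add_assoc, ← ENNReal.ofReal_ofNat 30,
          ← ENNReal.ofReal_add (by norm_num) (by rw [hlog₂]; linarith)]
        gcongr
        rw [hlog₂]
        linarith
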